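/- Fix p ∈ [0,1], shape factors k_L, k_N > 0, constants β₀ > 0 and η ∈ (0,1), a UAV–tag distance d > 0, a reflection fraction η_r ∈ (0,1), a transmit power P_v > 0 and noise powers σ_u², σ_v² > 0. Let X and Y be independent random variables, each a mixture-gamma channel power gain with parameters (p, k_L, β₀ d^{-2}, k_N, η β₀ d^{-2}), and denote by f the common mixture density. Define the backscatter SNR γ = η_r · P_v · X · Y / (X · σ_u² + σ_v²). Then for every x > 0, P(γ < x) = ∫₀^∞ [ p · Γ̃(k_L, x · (y σ_u² + σ_v²) · d² · k_L / (η_r · P_v · y · β₀)) + (1-p) · Γ̃(k_N, x · (y σ_u² + σ_v²) · d² · k_N / (η_r · P_v · y · η · β₀)) ] · f(y) dy. -/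

import Mathlib

open MeasureTheory

/-- Regularized lower incomplete gamma function
`Γ̃(k, x) = (1/Γ(k)) · ∫₀ˣ t^(k-1) e^(-t) dt`. -/
noncomputable def regGamma (k x : ℝ) : ℝ :=
  (1 / Real.Gamma k) * ∫ t in (0:ℝ)..x, t ^ (k - 1) * Real.exp (-t)

/-- Gamma density with shape `k > 0` and rate `r > 0`. -/
noncomputable def gammaDensity (k r x : ℝ) : ℝ :=
  if 0 < x then (r ^ k / Real.Gamma k) * x ^ (k - 1) * Real.exp (-(r * x)) else 0

/-- Mixture of two Gamma densities with means `ΩL`, `ΩN` and weights `p`, `1-p`. -/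
noncomputable def mixDensity (p kL ΩL kN ΩN x : ℝ) : ℝ :=
  p * gammaDensity kL (kL / ΩL) x + (1 - p) * gammaDensity kN (kN / ΩN) x

lemma intInt {k : ℝ} (hk : 0 < k) (a b : ℝ) :
    IntervalIntegrable (fun t : ℝ => t ^ (k - 1) * Real.exp (-t)) volume a b :=
  (intervalIntegral.intervalIntegrable_rpow' (by linarith)).mul_continuousOn
    (Real.continuous_exp.comp continuous_neg).continuousOn

lemma continuous_regGamma {k : ℝ} (hk : 0 < k) : Continuous (regGamma k) :=
  continuous_const.mul (intervalIntegral.continuous_primitive (fun a b => intInt hk a b) 0)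

lemma regGamma_nonneg {k x : ℝ} (hk : 0 < k) (hx : 0 ≤ x) : 0 ≤ regGamma k x :=
  mul_nonneg (one_div_nonneg.2 (Real.Gamma_pos_of_pos hk).le)
    (intervalIntegral.integral_nonneg hx
      (fun t ht => mul_nonneg (Real.rpow_nonneg ht.1 _) (Real.exp_nonneg _)))

lemma measurable_gammaDensity (k r : ℝ) : Measurable (gammaDensity k r) := by
  unfold gammaDensity
  refine Measurable.ite measurableSet_Ioi ?_ measurable_const
  exact ((measurable_id'.pow_const _).const_mul _).mul ((measurable_id'.const_mul _).neg.exp)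

lemma gammaDensity_nonpos {k r x : ℝ} (hx : x ≤ 0) : gammaDensity k r x = 0 := by
  simp [gammaDensity, not_lt.2 hx]

lemma gammaDensity_nonneg {k r : ℝ} (hk : 0 < k) (hr : 0 < r) (x : ℝ) :
    0 ≤ gammaDensity k r x := by
  unfold gammaDensity; split_ifs with h
  · positivity
  · exact le_refl 0

lemma gammaDensity_ae (k r : ℝ) :
    gammaDensity k r =ᵐ[(volume : Measure ℝ)] ProbabilityTheory.gammaPDFReal k r := by
  have h : ∀ y : ℝ, y ≠ 0 → gammaDensity k r y = ProbabilityTheory.gammaPDFReal k r y := by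
    intro y hy
    rcases hy.lt_or_gt with h | h
    · simp [gammaDensity, ProbabilityTheory.gammaPDFReal, not_lt.2 h.le, not_le.2 h]
    · simp [gammaDensity, ProbabilityTheory.gammaPDFReal, h, h.le, mul_assoc]
  have h0 : ({0} : Set ℝ)ᶜ ∈ MeasureTheory.ae (volume : Measure ℝ) :=
    compl_mem_ae_iff.mpr (measure_singleton 0)
  filter_upwards [h0] with y hy
  exact h y hy

lemma integrable_gammaDensity {k r : ℝ} (hk : 0 < k) (hr : 0 < r) :
    Integrable (gammaDensity k r) (volume : Measure ℝ) := by
  have h1 : Integrable (ProbabilityTheory.gammaPDFReal k r) (volume : Measure ℝ) := by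
    refine ⟨(ProbabilityTheory.measurable_gammaPDFReal k r).aestronglyMeasurable, ?_⟩
    rw [hasFiniteIntegral_iff_ofReal
      (ae_of_all _ (ProbabilityTheory.gammaPDFReal_nonneg hk hr))]
    have : ∫⁻ x, ENNReal.ofReal (ProbabilityTheory.gammaPDFReal k r x) = 1 :=
      ProbabilityTheory.lintegral_gammaPDF_eq_one hk hr
    rw [this]; exact ENNReal.one_lt_top
  exact h1.congr (gammaDensity_ae k r).symm

lemma integral_gammaDensity {k r t : ℝ} (hk : 0 < k) (hr : 0 < r) (ht : 0 ≤ t) :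
    ∫ y in (0:ℝ)..t, gammaDensity k r y = regGamma k (r * t) := by
  have hΓ : Real.Gamma k ≠ 0 := (Real.Gamma_pos_of_pos hk).ne'
  have hrk : r ^ k = r ^ (k - 1) * r := by
    rw [← Real.rpow_add_one hr.ne' (k - 1), sub_add_cancel]
  have hcong : ∫ y in (0:ℝ)..t, gammaDensity k r y
      = ∫ y in (0:ℝ)..t,
          (r / Real.Gamma k) * ((r * y) ^ (k - 1) * Real.exp (-(r * y))) := by
    rw [intervalIntegral.integral_of_le ht, intervalIntegral.integral_of_le ht]
    refine setIntegral_congr_fun measurableSet_Ioc (fun y hy => ?_)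
    rw [gammaDensity, if_pos hy.1, Real.mul_rpow hr.le hy.1.le, hrk]
    ring
  have hkey := intervalIntegral.integral_comp_mul_left (a := (0:ℝ)) (b := t)
    (fun s => s ^ (k - 1) * Real.exp (-s)) hr.ne'
  rw [mul_zero] at hkey
  rw [hcong, intervalIntegral.integral_const_mul, hkey, smul_eq_mul, regGamma]
  field_simp

lemma measurable_mixDensity (p kL ΩL kN ΩN : ℝ) : Measurable (mixDensity p kL ΩL kN ΩN) :=
  ((measurable_gammaDensity _ _).const_mul p).add
    ((measurable_gammaDensity _ _).const_mul (1 - p))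

lemma mixDensity_nonpos {p kL ΩL kN ΩN x : ℝ} (hx : x ≤ 0) :
    mixDensity p kL ΩL kN ΩN x = 0 := by
  simp [mixDensity, gammaDensity_nonpos hx]

lemma mixDensity_nonneg {p kL ΩL kN ΩN : ℝ} (hp0 : 0 ≤ p) (hp1 : p ≤ 1)
    (hkL : 0 < kL) (hkN : 0 < kN) (hΩL : 0 < ΩL) (hΩN : 0 < ΩN) (x : ℝ) :
    0 ≤ mixDensity p kL ΩL kN ΩN x :=
  add_nonneg (mul_nonneg hp0 (gammaDensity_nonneg hkL (div_pos hkL hΩL) x))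
    (mul_nonneg (by linarith) (gammaDensity_nonneg hkN (div_pos hkN hΩN) x))

lemma integrable_mixDensity {p kL ΩL kN ΩN : ℝ}
    (hkL : 0 < kL) (hkN : 0 < kN) (hΩL : 0 < ΩL) (hΩN : 0 < ΩN) :
    Integrable (mixDensity p kL ΩL kN ΩN) (volume : Measure ℝ) :=
  (((integrable_gammaDensity hkL (div_pos hkL hΩL)).const_mul p).add
    ((integrable_gammaDensity hkN (div_pos hkN hΩN)).const_mul (1 - p)))

lemma lintegral_mix_Iio {p kL ΩL kN ΩN t : ℝ} (hp0 : 0 ≤ p) (hp1 : p ≤ 1)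
    (hkL : 0 < kL) (hkN : 0 < kN) (hΩL : 0 < ΩL) (hΩN : 0 < ΩN) (ht : 0 < t) :
    ∫⁻ v in Set.Iio t, ENNReal.ofReal (mixDensity p kL ΩL kN ΩN v)
      = ENNReal.ofReal (p * regGamma kL (kL / ΩL * t)
          + (1 - p) * regGamma kN (kN / ΩN * t)) := by
  have hA : ∫⁻ v in Set.Iio t, ENNReal.ofReal (mixDensity p kL ΩL kN ΩN v)
      = ∫⁻ v in Set.Ioo 0 t, ENNReal.ofReal (mixDensity p kL ΩL kN ΩN v) := by
    rw [← lintegral_indicator measurableSet_Iio _, ← lintegral_indicator measurableSet_Ioo _]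
    congr 1; funext v
    by_cases h1 : v ∈ Set.Ioo (0:ℝ) t
    · rw [Set.indicator_of_mem h1, Set.indicator_of_mem (Set.mem_Iio.2 h1.2)]
    · rw [Set.indicator_of_notMem h1]
      by_cases h2 : v ∈ Set.Iio t
      · rw [Set.indicator_of_mem h2]
        have hv : v ≤ 0 := by
          by_contra hv
          exact h1 ⟨lt_of_not_ge hv, h2⟩
        rw [mixDensity_nonpos hv, ENNReal.ofReal_zero]
      · rw [Set.indicator_of_notMem h2]
  have hint : IntegrableOn (mixDensity p kL ΩL kN ΩN) (Set.Ioo 0 t) volume :=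
    (integrable_mixDensity hkL hkN hΩL hΩN).integrableOn
  have hB : ∫⁻ v in Set.Ioo 0 t, ENNReal.ofReal (mixDensity p kL ΩL kN ΩN v)
      = ENNReal.ofReal (∫ v in Set.Ioo (0:ℝ) t, mixDensity p kL ΩL kN ΩN v) :=
    (ofReal_integral_eq_lintegral_ofReal hint
      (ae_of_all _ (fun v => mixDensity_nonneg hp0 hp1 hkL hkN hΩL hΩN v))).symm
  have hC : ∫ v in Set.Ioo (0:ℝ) t, mixDensity p kL ΩL kN ΩN v
      = p * regGamma kL (kL / ΩL * t) + (1 - p) * regGamma kN (kN / ΩN * t) := by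
    rw [← integral_Ioc_eq_integral_Ioo, ← intervalIntegral.integral_of_le ht.le]
    unfold mixDensity
    rw [intervalIntegral.integral_add
        (((integrable_gammaDensity hkL (div_pos hkL hΩL)).const_mul p).intervalIntegrable)
        (((integrable_gammaDensity hkN (div_pos hkN hΩN)).const_mul (1-p)).intervalIntegrable),
      intervalIntegral.integral_const_mul, intervalIntegral.integral_const_mul,
      integral_gammaDensity hkL (div_pos hkL hΩL) ht.le,
      integral_gammaDensity hkN (div_pos hkN hΩN) ht.le]
  rw [hA, hB, hC]

/-- **CDF of the backscatter SNR.** Let `X`, `Y` be independent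
mixture-gamma channel power gains (LoS mean `β₀ d⁻²`, NLoS mean `η β₀ d⁻²`,
common density `f`) and `γ = η_r P_v X Y / (X σ_u² + σ_v²)`. Then for `x > 0`,
`P(γ < x) = ∫₀^∞ [p Γ̃(k_L, x (y σ_u² + σ_v²) d² k_L/(η_r P_v y β₀))
  + (1-p) Γ̃(k_N, x (y σ_u² + σ_v²) d² k_N/(η_r P_v y η β₀))] f(y) dy`. -/
theorem backscatter_snr_cdf
    {α : Type*} [MeasureSpace α] [IsProbabilityMeasure (volume : Measure α)]
    (p kL kN β₀ η d ηr Pv σu2 σv2 : ℝ)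
    (hp : p ∈ Set.Icc (0:ℝ) 1) (hkL : 0 < kL) (hkN : 0 < kN) (hβ₀ : 0 < β₀)
    (hη : η ∈ Set.Ioo (0:ℝ) 1) (hd : 0 < d) (hηr : ηr ∈ Set.Ioo (0:ℝ) 1)
    (hPv : 0 < Pv) (hσu2 : 0 < σu2) (hσv2 : 0 < σv2)
    (X Y : α → ℝ) (hXnonneg : ∀ ω, 0 ≤ X ω) (hYnonneg : ∀ ω, 0 ≤ Y ω)
    (hX : Measurable X) (hY : Measurable Y)
    (hindep : ProbabilityTheory.IndepFun X Y volume)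
    (hlawX : Measure.map X volume =
      (volume : Measure ℝ).withDensity
        (fun y => ENNReal.ofReal
          (mixDensity p kL (β₀ * d ^ (-2 : ℝ)) kN (η * β₀ * d ^ (-2 : ℝ)) y)))
    (hlawY : Measure.map Y volume =
      (volume : Measure ℝ).withDensity
        (fun y => ENNReal.ofReal
          (mixDensity p kL (β₀ * d ^ (-2 : ℝ)) kN (η * β₀ * d ^ (-2 : ℝ)) y)))
    (x : ℝ) (hx : 0 < x) :
    ((volume : Measure α)
        {ω | ηr * Pv * X ω * Y ω / (X ω * σu2 + σv2) < x}).toReal =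
      ∫ y in Set.Ioi (0:ℝ),
        (p * regGamma kL (x * (y * σu2 + σv2) * d ^ 2 * kL / (ηr * Pv * y * β₀)) +
          (1 - p) * regGamma kN (x * (y * σu2 + σv2) * d ^ 2 * kN / (ηr * Pv * y * η * β₀))) *
          mixDensity p kL (β₀ * d ^ (-2 : ℝ)) kN (η * β₀ * d ^ (-2 : ℝ)) y := by
  obtain ⟨hp0, hp1⟩ := hp
  obtain ⟨hηr0, hηr1⟩ := hηr
  obtain ⟨hη0, hη1⟩ := hη
  have hdpow : d ^ (-2:ℝ) = (d ^ 2)⁻¹ := by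
    rw [show (-2:ℝ) = ((-2:ℤ):ℝ) by norm_num, Real.rpow_intCast, zpow_neg, zpow_two, sq]
  have hd2 : (0:ℝ) < d ^ (-2:ℝ) := Real.rpow_pos_of_pos hd _
  set ΩL := β₀ * d ^ (-2:ℝ) with hΩLdef
  set ΩN := η * β₀ * d ^ (-2:ℝ) with hΩNdef
  have hΩL : 0 < ΩL := mul_pos hβ₀ hd2
  have hΩN : 0 < ΩN := mul_pos (mul_pos hη0 hβ₀) hd2
  set f : ℝ → ℝ := mixDensity p kL ΩL kN ΩN with hfdef
  set fE : ℝ → ENNReal := fun y => ENNReal.ofReal (f y) with hfEdef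
  set ν : Measure ℝ := (volume : Measure ℝ).withDensity fE with hνdef
  haveI hprob : IsProbabilityMeasure ν := by
    rw [← hlawY]
    exact Measure.isProbabilityMeasure_map hY.aemeasurable
  set G : ℝ → ℝ := fun y =>
    p * regGamma kL (x * (y * σu2 + σv2) * d ^ 2 * kL / (ηr * Pv * y * β₀)) +
      (1 - p) * regGamma kN (x * (y * σu2 + σv2) * d ^ 2 * kN / (ηr * Pv * y * η * β₀))
    with hGdef
  set S : Set (ℝ × ℝ) := {q : ℝ × ℝ | ηr * Pv * q.1 * q.2 / (q.1 * σu2 + σv2) < x} with hSdef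
  have hS : MeasurableSet S := by
    apply measurableSet_lt _ measurable_const
    exact ((measurable_fst.const_mul (ηr * Pv)).mul measurable_snd).div
      ((measurable_fst.mul_const σu2).add_const σv2)
  have hmapXY : (volume : Measure α).map (fun ω => (X ω, Y ω)) = ν.prod ν := by
    have h := (ProbabilityTheory.indepFun_iff_map_prod_eq_prod_map_map
      hX.aemeasurable hY.aemeasurable).mp hindep
    rw [h, hlawX, hlawY]
  have h1 : (volume : Measure α) {ω | ηr * Pv * X ω * Y ω / (X ω * σu2 + σv2) < x}
      = (ν.prod ν) S := by
    rw [← hmapXY, Measure.map_apply (hX.prodMk hY) hS]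
    rfl
  have h2 : (ν.prod ν) S = ∫⁻ u, ν {v | (u, v) ∈ S} ∂ν := Measure.prod_apply hS
  have hgmeas : Measurable fun u => ν {v | (u, v) ∈ S} :=
    measurable_measure_prodMk_left hS
  have hfE : Measurable fE := (measurable_mixDensity p kL ΩL kN ΩN).ennreal_ofReal
  have h3 : ∫⁻ u, ν {v | (u, v) ∈ S} ∂ν = ∫⁻ u, fE u * ν {v | (u, v) ∈ S} := by
    rw [hνdef, lintegral_withDensity_eq_lintegral_mul _ hfE hgmeas]
    rfl
  have h4 : ∫⁻ u, fE u * ν {v | (u, v) ∈ S}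
      = ∫⁻ u in Set.Ioi (0:ℝ), fE u * ν {v | (u, v) ∈ S} := by
    rw [← lintegral_indicator measurableSet_Ioi _]
    congr 1; funext u
    by_cases hu : u ∈ Set.Ioi (0:ℝ)
    · exact (Set.indicator_of_mem hu (fun u => fE u * ν {v | (u, v) ∈ S})).symm
    · rw [Set.indicator_of_notMem hu]
      have hfu : f u = 0 := mixDensity_nonpos (not_lt.1 hu)
      simp [hfEdef, hfu]
  have h5 : ∀ u ∈ Set.Ioi (0:ℝ), fE u * ν {v | (u, v) ∈ S} = ENNReal.ofReal (G u * f u) := by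
    intro u hu
    have hu0 : (0:ℝ) < u := hu
    have hden : (0:ℝ) < u * σu2 + σv2 := by positivity
    have hc : (0:ℝ) < ηr * Pv * u := by positivity
    set t := x * (u * σu2 + σv2) / (ηr * Pv * u) with htdef
    have ht : 0 < t := div_pos (by positivity) hc
    have hsec : {v | (u, v) ∈ S} = Set.Iio t := by
      ext v
      simp only [hSdef, Set.mem_setOf_eq, Set.mem_Iio]
      rw [div_lt_iff₀ hden, htdef, lt_div_iff₀ hc]
      constructor <;> intro h <;> nlinarith [h]
    have hargL : kL / ΩL * t = x * (u * σu2 + σv2) * d ^ 2 * kL / (ηr * Pv * u * β₀) := by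
      rw [hΩLdef, htdef, hdpow]
      field_simp
    have hargN : kN / ΩN * t
        = x * (u * σu2 + σv2) * d ^ 2 * kN / (ηr * Pv * u * η * β₀) := by
      rw [hΩNdef, htdef, hdpow]
      field_simp
    rw [hsec, hνdef, withDensity_apply _ measurableSet_Iio,
      lintegral_mix_Iio hp0 hp1 hkL hkN hΩL hΩN ht, hfEdef,
      ← ENNReal.ofReal_mul (mixDensity_nonneg hp0 hp1 hkL hkN hΩL hΩN u)]
    congr 1
    rw [hargL, hargN, hGdef]
    ring
  have h6 : ∫⁻ u in Set.Ioi (0:ℝ), fE u * ν {v | (u, v) ∈ S}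
      = ∫⁻ u in Set.Ioi (0:ℝ), ENNReal.ofReal (G u * f u) :=
    setLIntegral_congr_fun measurableSet_Ioi h5
  have hGf_nonneg : ∀ y : ℝ, 0 ≤ G y * f y := by
    intro y
    rcases le_or_gt y 0 with hy | hy
    · have hfy : f y = 0 := mixDensity_nonpos hy
      rw [hfy, mul_zero]
    · refine mul_nonneg ?_ (mixDensity_nonneg hp0 hp1 hkL hkN hΩL hΩN y)
      refine add_nonneg (mul_nonneg hp0 (regGamma_nonneg hkL (by positivity)))
        (mul_nonneg (by linarith) (regGamma_nonneg hkN (by positivity)))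
  have hGmeas : Measurable G := by
    rw [hGdef]
    apply Measurable.add
    · refine Measurable.const_mul ((continuous_regGamma hkL).measurable.comp ?_) p
      exact ((((measurable_id'.mul_const σu2).add_const σv2).const_mul x).mul_const
        (d ^ 2)).mul_const kL |>.div ((measurable_id'.const_mul (ηr * Pv)).mul_const β₀)
    · refine Measurable.const_mul ((continuous_regGamma hkN).measurable.comp ?_) (1 - p)
      exact ((((measurable_id'.mul_const σu2).add_const σv2).const_mul x).mul_const
        (d ^ 2)).mul_const kN |>.div
        (((measurable_id'.const_mul (ηr * Pv)).mul_const η).mul_const β₀)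
  rw [integral_eq_lintegral_of_nonneg_ae (ae_of_all _ hGf_nonneg)
      ((hGmeas.mul (measurable_mixDensity p kL ΩL kN ΩN)).aestronglyMeasurable.restrict)]
  rw [h1, h2, h3, h4, h6]
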